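/- Let k be a number field of degree n = [k:ℚ]. There exists a real δ > n with the following property: for every nonzero fractional ideal I of k, every real weight vector x = (x_v)_v indexed by the infinite places of k with ∏_v e^{x_v} = N(I), and every nonzero f ∈ I satisfying Q_x(f) > inf{Q_x(g) : g ∈ I, g ≠ 0}, one has Q_x(f) ≥ δ. -/

import Mathlib

/-!
Write `w_v(f) = |f|_v e^{-x_v / m_v}`, with `m_v ∈ {1, 2}` the multiplicity of `v`, so that
`Q_x(f) = ∑ m_v w_v(f)²` and, by the product formula, `∑ m_v log w_v(f) = log (|N f| / N(I))`.
For `0 ≠ f ∈ I` we have `(f) = I J` with `J` integral, and `w² - 1 - 2 log w ≥ (w - 1)²` gives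
`Q_x(f) ≥ n + 2 log N(J) + ∑ m_v (w_v(f) - 1)²`. Hence if `Q_x(f) < n + c²` with `c ≤ 1`, then
`f` generates `I` and every `w_v(f)` lies within `c` of `1`. If `g` is another such element, `f / g`
is an algebraic integer all of whose absolute values lie within `3c` of `1`; since there are only
finitely many algebraic integers with bounded conjugates, for small `c` this forces `|f / g|_v = 1`
for every `v`, so `Q_x(f) = Q_x(g)`. Thus `δ = n + c²` works.
-/

open NumberField Finset
open scoped Classical

variable (k : Type*) [Field k] [NumberField k]

/-- `Q_x(f) = ∑_{v real} |f|_v² e^{-2 x_v} + 2 ∑_{v complex} |f|_v² e^{-x_v}`. -/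
noncomputable def arakelovQ (x : InfinitePlace k → ℝ) (f : k) : ℝ :=
  ∑ v : InfinitePlace k,
    if v.IsReal then (v f) ^ 2 * Real.exp (-2 * x v)
    else 2 * (v f) ^ 2 * Real.exp (-(x v))

lemma sub_one_sq_le_sq_sub_one_sub_two_mul_log {w : ℝ} (hw : 0 < w) :
    (w - 1) ^ 2 ≤ w ^ 2 - 1 - 2 * Real.log w := by
  nlinarith [Real.log_le_sub_one_of_pos hw]

lemma abs_div_sub_one_lt {a b c : ℝ} (hc : c ≤ 1 / 3) (ha : |a - 1| < c) (hb : |b - 1| < c) :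
    |a / b - 1| < 3 * c := by
  rw [abs_lt] at ha hb
  have hb0 : 0 < b := by linarith
  rw [div_sub_one hb0.ne', abs_div, abs_of_pos hb0, div_lt_iff₀ hb0, abs_lt]
  constructor <;> nlinarith

lemma FractionalIdeal.exists_mul_coeIdeal_eq_spanSingleton {R K : Type*} [CommRing R]
    [IsDedekindDomain R] [Field K] [Algebra R K] [IsFractionRing R K]
    {I : FractionalIdeal (nonZeroDivisors R) K} (hI : I ≠ 0) {f : K} (hf : f ∈ I) :
    ∃ J : Ideal R, I * J = spanSingleton (nonZeroDivisors R) f := by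
  have hle : I⁻¹ * spanSingleton (nonZeroDivisors R) f ≤ 1 :=
    calc I⁻¹ * spanSingleton (nonZeroDivisors R) f ≤ I⁻¹ * I :=
          mul_le_mul_right (spanSingleton_le_iff_mem.mpr hf) _
      _ = 1 := inv_mul_cancel₀ hI
  obtain ⟨J, hJ⟩ := le_one_iff_exists_coeIdeal.mp hle
  exact ⟨J, by rw [hJ, ← mul_assoc, mul_inv_cancel₀ hI, one_mul]⟩

section WeightedAbs

variable {K : Type*} [Field K]

noncomputable def weightedAbs (x : InfinitePlace K → ℝ) (f : K) (v : InfinitePlace K) : ℝ :=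
  v f * Real.exp (-x v / v.mult)

lemma weightedAbs_pos (x : InfinitePlace K → ℝ) {f : K} (hf : f ≠ 0) (v : InfinitePlace K) :
    0 < weightedAbs x f v :=
  mul_pos (InfinitePlace.pos_iff.mpr hf) (Real.exp_pos _)

lemma weightedAbs_mul (x : InfinitePlace K → ℝ) (a b : K) (v : InfinitePlace K) :
    weightedAbs x (a * b) v = v a * weightedAbs x b v := by
  simp only [weightedAbs, map_mul, mul_assoc]

end WeightedAbs

variable {k}

lemma arakelovQ_eq_sum_mult_mul_weightedAbs_sq (x : InfinitePlace k → ℝ) (f : k) :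
    arakelovQ k x f = ∑ v, (v.mult : ℝ) * weightedAbs x f v ^ 2 := by
  refine sum_congr rfl fun v _ => ?_
  rw [weightedAbs, mul_pow, ← Real.exp_nat_mul]
  by_cases hv : v.IsReal
  · simp [hv, InfinitePlace.mult]
  · simp [hv, InfinitePlace.mult, mul_div_cancel₀]
    ring

lemma sum_mult_mul_log_weightedAbs (x : InfinitePlace k → ℝ) {f : k} (hf : f ≠ 0) :
    ∑ v, (v.mult : ℝ) * Real.log (weightedAbs x f v) =
      Real.log |(Algebra.norm ℚ f : ℝ)| - ∑ v, x v := by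
  have hnorm : ∑ v : InfinitePlace k, (v.mult : ℝ) * Real.log (v f) =
      Real.log |(Algebra.norm ℚ f : ℝ)| := by
    rw [← Rat.cast_abs, ← InfinitePlace.prod_eq_abs_norm,
      Real.log_prod fun v _ => pow_ne_zero _ (InfinitePlace.pos_iff.mpr hf).ne']
    simp only [Real.log_pow]
  rw [← hnorm, ← sum_sub_distrib]
  refine sum_congr rfl fun v _ => ?_
  rw [weightedAbs, Real.log_mul (InfinitePlace.pos_iff.mpr hf).ne' (Real.exp_pos _).ne',
    Real.log_exp, mul_add, mul_div_cancel₀ _ InfinitePlace.mult_coe_ne_zero]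
  ring

lemma finrank_add_two_mul_log_add_sum_le_arakelovQ (x : InfinitePlace k → ℝ) {f : k}
    (hf : f ≠ 0) :
    (Module.finrank ℚ k : ℝ) + 2 * (Real.log |(Algebra.norm ℚ f : ℝ)| - ∑ v, x v) +
      ∑ v, (v.mult : ℝ) * (weightedAbs x f v - 1) ^ 2 ≤ arakelovQ k x f := by
  rw [arakelovQ_eq_sum_mult_mul_weightedAbs_sq, ← sum_mult_mul_log_weightedAbs x hf,
    ← InfinitePlace.sum_mult_eq, Nat.cast_sum, mul_sum, ← sum_add_distrib, ← sum_add_distrib]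
  gcongr with v
  nlinarith [sub_one_sq_le_sq_sub_one_sub_two_mul_log (weightedAbs_pos x hf v),
    InfinitePlace.one_le_mult (w := v)]

lemma abs_norm_eq_absNorm_mul_absNorm {I : FractionalIdeal (nonZeroDivisors (𝓞 k)) k}
    {J : Ideal (𝓞 k)} {f : k}
    (hJ : I * (J : FractionalIdeal (nonZeroDivisors (𝓞 k)) k) =
      FractionalIdeal.spanSingleton _ f) :
    |Algebra.norm ℚ f| = FractionalIdeal.absNorm I * Ideal.absNorm J := by
  rw [← FractionalIdeal.absNorm_span_singleton (𝓞 k), ← hJ, map_mul,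
    FractionalIdeal.coeIdeal_absNorm]

lemma spanSingleton_eq_and_abs_weightedAbs_sub_one_lt
    {I : FractionalIdeal (nonZeroDivisors (𝓞 k)) k} (hI : I ≠ 0) {x : InfinitePlace k → ℝ}
    (hx : ∏ v, Real.exp (x v) = (FractionalIdeal.absNorm I : ℝ)) {c : ℝ} (hc0 : 0 ≤ c)
    (hc1 : c ≤ 1) {f : k} (hf : f ∈ I) (hf0 : f ≠ 0)
    (hQ : arakelovQ k x f < Module.finrank ℚ k + c ^ 2) :
    FractionalIdeal.spanSingleton _ f = I ∧ ∀ v, |weightedAbs x f v - 1| < c := by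
  obtain ⟨J, hJ⟩ := FractionalIdeal.exists_mul_coeIdeal_eq_spanSingleton hI hf
  have hnorm : |(Algebra.norm ℚ f : ℝ)| = FractionalIdeal.absNorm I * Ideal.absNorm J := by
    exact_mod_cast abs_norm_eq_absNorm_mul_absNorm hJ
  have hNI : (0 : ℝ) < FractionalIdeal.absNorm I := hx ▸ prod_pos fun v _ => Real.exp_pos _
  have hJ0 : (0 : ℝ) < Ideal.absNorm J := by
    have hNf : (0 : ℝ) < |(Algebra.norm ℚ f : ℝ)| := by
      simpa [Algebra.norm_eq_zero_iff] using hf0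
    rw [hnorm] at hNf
    exact pos_of_mul_pos_right hNf hNI.le
  have hlog : Real.log |(Algebra.norm ℚ f : ℝ)| - ∑ v, x v = Real.log (Ideal.absNorm J) := by
    rw [← Real.log_exp (∑ v, x v), Real.exp_sum, hx, hnorm,
      Real.log_mul hNI.ne' hJ0.ne', add_sub_cancel_left]
  have hbound := finrank_add_two_mul_log_add_sum_le_arakelovQ x hf0
  rw [hlog] at hbound
  have hsum_nonneg : 0 ≤ ∑ v, (v.mult : ℝ) * (weightedAbs x f v - 1) ^ 2 :=
    sum_nonneg fun v _ => by positivity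
  have hJ1 : Ideal.absNorm J = 1 := by
    have hlt2 : (Ideal.absNorm J : ℝ) < 2 := by
      rw [← Real.log_lt_log_iff hJ0 two_pos]
      nlinarith [Real.log_two_gt_d9]
    have hpos : 0 < Ideal.absNorm J := by exact_mod_cast hJ0
    have hlt2' : Ideal.absNorm J < 2 := by exact_mod_cast hlt2
    omega
  rw [hJ1, Nat.cast_one, Real.log_one] at hbound
  refine ⟨by rw [← hJ, Ideal.absNorm_eq_one_iff.mp hJ1, FractionalIdeal.coeIdeal_top, mul_one],
    fun v => abs_lt_of_sq_lt_sq ?_ hc0⟩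
  calc (weightedAbs x f v - 1) ^ 2 ≤ v.mult * (weightedAbs x f v - 1) ^ 2 :=
        le_mul_of_one_le_left (sq_nonneg _) InfinitePlace.one_le_mult
    _ ≤ ∑ v, (v.mult : ℝ) * (weightedAbs x f v - 1) ^ 2 :=
        single_le_sum (f := fun v => (v.mult : ℝ) * (weightedAbs x f v - 1) ^ 2)
          (fun v _ => by positivity) (mem_univ v)
    _ < c ^ 2 := by linarith

variable (k) in
lemma exists_pos_forall_abs_sub_one_lt_imp_eq_one :
    ∃ ε > 0, ∀ z : 𝓞 k, (∀ v : InfinitePlace k, |v z - 1| < ε) →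
      ∀ v : InfinitePlace k, v z = 1 := by
  set T : Set k := {y | IsIntegral ℤ y ∧ ∀ φ : k →+* ℂ, ‖φ y‖ ≤ 2} ∩
    {y | ∃ v : InfinitePlace k, v y ≠ 1}
  have hT : T.Finite := (Embeddings.finite_of_norm_le k ℂ 2).subset Set.inter_subset_left
  have hε : ∀ᶠ ε in nhdsWithin (0 : ℝ) (Set.Ioi 0),
      0 < ε ∧ ε ≤ 1 ∧ ∀ y ∈ T, ∃ v : InfinitePlace k, ε ≤ |v y - 1| := by
    refine eventually_mem_nhdsWithin.and <|
      ((eventually_le_nhds one_pos).filter_mono nhdsWithin_le_nhds).and <|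
      hT.eventually_all.2 fun y hy => ?_
    obtain ⟨v, hv⟩ := hy.2
    exact ((eventually_le_nhds (abs_pos.2 (sub_ne_zero.2 hv))).filter_mono
      nhdsWithin_le_nhds).mono fun ε hε => ⟨v, hε⟩
  obtain ⟨ε, hε0, hε1, hεT⟩ := hε.exists
  refine ⟨ε, hε0, fun z hz => ?_⟩
  by_contra! hne
  have hbdd (φ : k →+* ℂ) : ‖φ z‖ ≤ 2 := by
    rw [← InfinitePlace.apply]
    linarith [(abs_lt.1 (hz (InfinitePlace.mk φ))).2]
  obtain ⟨v, hv⟩ := hεT z ⟨⟨RingOfIntegers.isIntegral_coe z, hbdd⟩, hne⟩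
  linarith [hz v]

theorem second_minimum_uniform_gap :
    ∃ δ : ℝ, (Module.finrank ℚ k : ℝ) < δ ∧
      ∀ I : FractionalIdeal (nonZeroDivisors (𝓞 k)) k, I ≠ 0 →
      ∀ x : InfinitePlace k → ℝ,
        (∏ v : InfinitePlace k, Real.exp (x v) = (FractionalIdeal.absNorm I : ℝ)) →
      ∀ f : k, f ∈ I → f ≠ 0 →
        sInf {r : ℝ | ∃ g : k, g ∈ I ∧ g ≠ 0 ∧ arakelovQ k x g = r} < arakelovQ k x f →
        δ ≤ arakelovQ k x f := by
  obtain ⟨ε, hε, hrigid⟩ := exists_pos_forall_abs_sub_one_lt_imp_eq_one k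
  set c := min (1 / 3 : ℝ) (ε / 3)
  have hc0 : 0 < c := lt_min (by norm_num) (by positivity)
  have hc1 : c ≤ 1 := (min_le_left _ _).trans (by norm_num)
  refine ⟨Module.finrank ℚ k + c ^ 2, by linarith [pow_pos hc0 2], ?_⟩
  intro I hI x hx f hf hf0 hlt
  by_contra! hfδ
  obtain ⟨_, ⟨g, hg, hg0, rfl⟩, hgf⟩ :=
    exists_lt_of_csInf_lt (by exact ⟨_, f, hf, hf0, rfl⟩) hlt
  obtain ⟨-, hwf⟩ :=
    spanSingleton_eq_and_abs_weightedAbs_sub_one_lt hI hx hc0.le hc1 hf hf0 hfδ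
  obtain ⟨hgI, hwg⟩ :=
    spanSingleton_eq_and_abs_weightedAbs_sub_one_lt hI hx hc0.le hc1 hg hg0 (hgf.trans hfδ)
  obtain ⟨z, rfl⟩ := (FractionalIdeal.mem_spanSingleton _).1 (hgI ▸ hf)
  have hz : ∀ v : InfinitePlace k, v z = 1 := hrigid z fun v => by
    have := abs_div_sub_one_lt (min_le_left _ _) (hwf v) (hwg v)
    rw [Algebra.smul_def, weightedAbs_mul, mul_div_cancel_right₀ _ (weightedAbs_pos x hg0 v).ne']
      at this
    linarith [min_le_right (1 / 3 : ℝ) (ε / 3)]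
  have hQ_eq : arakelovQ k x (z • g) = arakelovQ k x g := by
    simp [arakelovQ, Algebra.smul_def, hz]
  linarith
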